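/- Let c > 0 and μ ∈ ℝ. The uniform density u(x) = c·1_{[μ−1/(2c), μ+1/(2c)]}(x) is a probability density with 0 ≤ u ≤ c, mean μ, and variance exactly 1/(12·c²). Moreover, if f : ℝ → ℝ is any measurable probability density with 0 ≤ f(x) ≤ c for all x, mean μ, and variance equal to 1/(12·c²), then f(x) = u(x) for Lebesgue-almost every x ∈ ℝ. -/

import Mathlib

/-! With `a = 1/(2c)`, equal mass and equal second moment about `μ` give
`∫ ((x - μ)² - a²) (f - u) = 0`. The integrand is nonnegative: on `[μ - a, μ + a]` the weight is
`≤ 0` and `f ≤ c = u`, outside it the weight is `≥ 0` and `f ≥ 0 = u`. So `f = u` wherever the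
weight does not vanish, that is, off the two points `μ ± a`. -/

open MeasureTheory

/-- The uniform density `u = c · 1_{[μ−1/(2c), μ+1/(2c)]}`. -/
noncomputable def unifDensity (c μ : ℝ) (x : ℝ) : ℝ :=
  if x ∈ Set.Icc (μ - 1 / (2 * c)) (μ + 1 / (2 * c)) then c else 0

theorem ae_eq_of_integral_eq_of_integral_mul_eq {α : Type*} [MeasurableSpace α] {ν : Measure α}
    {f g p : α → ℝ} {k : ℝ}
    (hf : Integrable f ν) (hg : Integrable g ν)
    (hpf : Integrable (fun x => p x * f x) ν) (hpg : Integrable (fun x => p x * g x) ν)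
    (h_int : ∫ x, f x ∂ν = ∫ x, g x ∂ν)
    (h_int_mul : ∫ x, p x * f x ∂ν = ∫ x, p x * g x ∂ν)
    (hp : ∀ᵐ x ∂ν, p x ≠ k) (h_sign : ∀ᵐ x ∂ν, 0 ≤ (p x - k) * (f x - g x)) :
    f =ᵐ[ν] g := by
  have hF : Integrable (fun x => p x * f x - k * f x) ν := hpf.sub (hf.const_mul k)
  have hG : Integrable (fun x => p x * g x - k * g x) ν := hpg.sub (hg.const_mul k)
  have h_eq : (fun x => (p x - k) * (f x - g x))
      = fun x => (p x * f x - k * f x) - (p x * g x - k * g x) := by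
    ext x; ring
  have h_integrable : Integrable (fun x => (p x - k) * (f x - g x)) ν := by
    rw [h_eq]; exact hF.sub hG
  have h_zero : ∫ x, (p x - k) * (f x - g x) ∂ν = 0 := by
    rw [h_eq, integral_sub hF hG, integral_sub hpf (hf.const_mul k),
      integral_sub hpg (hg.const_mul k), integral_const_mul, integral_const_mul, h_int, h_int_mul,
      sub_self]
  have h_ae := (integral_eq_zero_iff_of_nonneg_ae h_sign h_integrable).mp h_zero
  filter_upwards [h_ae, hp] with x hx hpx
  exact sub_eq_zero.mp ((mul_eq_zero.mp hx).resolve_left (sub_ne_zero.mpr hpx))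

theorem ae_sq_sub_ne (m a : ℝ) : ∀ᵐ x : ℝ, (x - m) ^ 2 ≠ a ^ 2 := by
  refine measure_mono_null (fun x hx => ?_) ((Set.toFinite {m - a, m + a}).measure_zero _)
  have : (x - (m - a)) * (x - (m + a)) = 0 := by
    have hx : (x - m) ^ 2 = a ^ 2 := by simpa using hx
    linear_combination hx
  rcases mul_eq_zero.mp this with h | h
  · exact Or.inl (sub_eq_zero.mp h)
  · exact Or.inr (sub_eq_zero.mp h)

theorem MeasureTheory.Integrable.sub_sq_mul {f : ℝ → ℝ} (m : ℝ) (hf : Integrable f)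
    (h₁ : Integrable fun x => x * f x) (h₂ : Integrable fun x => x ^ 2 * f x) :
    Integrable fun x => (x - m) ^ 2 * f x := by
  have h_eq : (fun x => (x - m) ^ 2 * f x)
      = fun x => (x ^ 2 * f x - 2 * m * (x * f x)) + m ^ 2 * f x := by
    ext x; ring
  rw [h_eq]
  exact (h₂.sub (h₁.const_mul _)).add (hf.const_mul _)

namespace unifDensity

variable {c : ℝ} (μ : ℝ)

theorem nonneg (hc : 0 ≤ c) (x : ℝ) : 0 ≤ unifDensity c μ x := by
  unfold unifDensity; split_ifs <;> simp [hc]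

theorem le (hc : 0 ≤ c) (x : ℝ) : unifDensity c μ x ≤ c := by
  unfold unifDensity; split_ifs <;> simp [hc]

theorem mul_eq_indicator (g : ℝ → ℝ) :
    (fun x => g x * unifDensity c μ x)
      = (Set.Icc (μ - 1 / (2 * c)) (μ + 1 / (2 * c))).indicator (fun x => g x * c) := by
  ext x
  simp only [unifDensity, Set.indicator_apply]
  split_ifs <;> simp

theorem integrable_mul {g : ℝ → ℝ} (hg : Continuous g) :
    Integrable fun x => g x * unifDensity c μ x := by
  rw [mul_eq_indicator, integrable_indicator_iff measurableSet_Icc]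
  exact (hg.mul continuous_const).integrableOn_Icc

theorem integral_mul (hc : 0 ≤ c) (g : ℝ → ℝ) :
    ∫ x, g x * unifDensity c μ x
      = c * ∫ x in (μ - 1 / (2 * c))..(μ + 1 / (2 * c)), g x := by
  have h_le : μ - 1 / (2 * c) ≤ μ + 1 / (2 * c) := by
    have : 0 ≤ 1 / (2 * c) := by positivity
    linarith
  rw [mul_eq_indicator, integral_indicator measurableSet_Icc, integral_Icc_eq_integral_Ioc,
    ← intervalIntegral.integral_of_le h_le, intervalIntegral.integral_mul_const, mul_comm]

theorem integral (hc : 0 < c) : ∫ x, unifDensity c μ x = 1 := by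
  have := integral_mul μ hc.le fun _ => 1
  simp only [one_mul, intervalIntegral.integral_const, smul_eq_mul, mul_one] at this
  rw [this]
  field_simp
  ring

theorem integral_id_mul (hc : 0 < c) : ∫ x, x * unifDensity c μ x = μ := by
  rw [integral_mul μ hc.le, integral_id]
  field_simp
  ring

theorem integral_sub_sq_mul (hc : 0 < c) :
    ∫ x, (x - μ) ^ 2 * unifDensity c μ x = 1 / (12 * c ^ 2) := by
  rw [integral_mul μ hc.le, intervalIntegral.integral_comp_sub_right (fun t => t ^ 2) μ,
    integral_pow]
  simp only [add_sub_cancel_left, sub_sub_cancel_left]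
  norm_num
  field_simp
  ring

theorem sub_sq_mul_sub_nonneg (hc : 0 ≤ c) {x y : ℝ} (hy₀ : 0 ≤ y) (hyc : y ≤ c) :
    0 ≤ ((x - μ) ^ 2 - (1 / (2 * c)) ^ 2) * (y - unifDensity c μ x) := by
  have ha : 0 ≤ 1 / (2 * c) := by positivity
  unfold unifDensity
  split_ifs with hx
  · obtain ⟨h₁, h₂⟩ := hx
    have : (x - μ) ^ 2 ≤ (1 / (2 * c)) ^ 2 := by nlinarith
    nlinarith
  · rw [Set.mem_Icc, not_and_or, not_le, not_le] at hx
    have : (1 / (2 * c)) ^ 2 ≤ (x - μ) ^ 2 := by rcases hx with hx | hx <;> nlinarith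
    nlinarith

end unifDensity

/-- The uniform density `u = c·1_{[μ−1/(2c),μ+1/(2c)]}` is a probability
density bounded by `c`, with mean `μ` and variance exactly `1/(12c²)`;
moreover, it is the almost-everywhere unique such density attaining this
minimal variance. -/
theorem uniform_unique_minimal_variance (c μ : ℝ) (hc : 0 < c) :
    (∀ x, 0 ≤ unifDensity c μ x ∧ unifDensity c μ x ≤ c)
    ∧ (∫ x, unifDensity c μ x) = 1
    ∧ (∫ x, x * unifDensity c μ x) = μ
    ∧ (∫ x, (x - μ) ^ 2 * unifDensity c μ x) = 1 / (12 * c ^ 2)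
    ∧ (∀ f : ℝ → ℝ, Measurable f → (∀ x, 0 ≤ f x) → (∀ x, f x ≤ c) →
        (∫ x, f x) = 1 →
        (Integrable fun x => x * f x) → (Integrable fun x => x ^ 2 * f x) →
        (∫ x, x * f x) = μ →
        (∫ x, (x - μ) ^ 2 * f x) = 1 / (12 * c ^ 2) →
        f =ᵐ[volume] unifDensity c μ) := by
  refine ⟨fun x => ⟨unifDensity.nonneg μ hc.le x, unifDensity.le μ hc.le x⟩,
    unifDensity.integral μ hc, unifDensity.integral_id_mul μ hc,
    unifDensity.integral_sub_sq_mul μ hc, ?_⟩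
  intro f _ hf₀ hfc hf₁ hxf hx2f _ hvar
  have hf : Integrable f := .of_integral_ne_zero (by simp [hf₁])
  have hu : Integrable (unifDensity c μ) := by
    simpa using unifDensity.integrable_mul μ (g := fun _ => 1) continuous_const
  exact ae_eq_of_integral_eq_of_integral_mul_eq hf hu (hf.sub_sq_mul μ hxf hx2f)
    (unifDensity.integrable_mul μ (by fun_prop))
    (hf₁.trans (unifDensity.integral μ hc).symm)
    (hvar.trans (unifDensity.integral_sub_sq_mul μ hc).symm)
    (ae_sq_sub_ne μ (1 / (2 * c)))
    (.of_forall fun x => unifDensity.sub_sq_mul_sub_nonneg μ hc.le (hf₀ x) (hfc x))
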